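/- Let q ≥ 2, k = 2, and F = {f_≠} where f_≠ : [q]² → {0,1} is given by f_≠(x,y) = 1 iff x ≠ y (the Max-q-Coloring predicate). Let D^Y be the uniform distribution on {(f_≠, (σ,τ)) : σ,τ ∈ [q], σ ≠ τ} and D^N the uniform distribution on {f_≠} × [q]². Then D^Y ∈ S_1^Y(F), D^N ∈ S_{1−1/q}^N(F), and μ(D^Y) = μ(D^N). -/

import Mathlib

open scoped Classical

/-- `D` is a probability distribution on the finite type `Ω`. -/
def IsDist {Ω : Type*} [Fintype Ω] (D : Ω → ℝ) : Prop :=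
  (∀ x, 0 ≤ D x) ∧ ∑ x, D x = 1

/-- The value `C(f,a)(b)` of the constraint `(f,a)` on the assignment
`b = (b_{i,σ})` to the `k × q` variables (alphabet `A`). -/
def cVal {A : Type*} {k : ℕ} (f : (Fin k → A) → Bool) (a : Fin k → A)
    (b : Fin k → A → A) : ℝ :=
  if f (fun i => b i (a i)) then 1 else 0

/-- The planted assignment `𝕀` with `𝕀_{i,σ} = σ`. -/
def planted (A : Type*) (k : ℕ) : Fin k → A → A := fun _ σ => σ

/-- The set `S_γ^Y(F)` of YES distributions. -/
noncomputable def SY {A : Type*} [Fintype A] {k : ℕ}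
    (F : Finset ((Fin k → A) → Bool)) (γ : ℝ) :
    Set ((↥F × (Fin k → A)) → ℝ) :=
  {D | IsDist D ∧
    γ ≤ ∑ p : ↥F × (Fin k → A), D p * cVal (p.1 : (Fin k → A) → Bool) p.2 (planted A k)}

/-- The set `S_β^N(F)` of NO distributions. -/
noncomputable def SN {A : Type*} [Fintype A] {k : ℕ}
    (F : Finset ((Fin k → A) → Bool)) (β : ℝ) :
    Set ((↥F × (Fin k → A)) → ℝ) :=
  {D | IsDist D ∧ ∀ P : A → A → ℝ, (∀ σ, IsDist (P σ)) →
    (∑ p : ↥F × (Fin k → A), D p *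
      ∑ b : Fin k → A → A,
        (∏ i, ∏ σ, P σ (b i σ)) * cVal (p.1 : (Fin k → A) → Bool) p.2 b) ≤ β}

/-- The marginal vector `μ(D)` of a distribution `D` on `F × A^k`. -/
noncomputable def marginal {A : Type*} [Fintype A] {k : ℕ}
    (F : Finset ((Fin k → A) → Bool)) (D : ↥F × (Fin k → A) → ℝ) :
    ↥F × Fin k × A → ℝ :=
  fun x => ∑ a : Fin k → A, if a x.2.1 = x.2.2 then D (x.1, a) else 0

/-- The Max-q-Coloring constraint `f_≠(x,y) = 1` iff `x ≠ y`. -/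
def fNe (q : ℕ) : (Fin 2 → Fin q) → Bool :=
  fun a => decide (a 0 ≠ a 1)

/-- The YES distribution for Max-q-Coloring: uniform on `{(f_≠,(σ,τ)) : σ ≠ τ}`. -/
noncomputable def colDY (q : ℕ) :
    ↥({fNe q} : Finset ((Fin 2 → Fin q) → Bool)) × (Fin 2 → Fin q) → ℝ :=
  fun p => if p.2 0 ≠ p.2 1 then ((q : ℝ) * ((q : ℝ) - 1))⁻¹ else 0

/-- The NO distribution for Max-q-Coloring: uniform on `{f_≠} × [q]²`. -/
noncomputable def colDN (q : ℕ) :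
    ↥({fNe q} : Finset ((Fin 2 → Fin q) → Bool)) × (Fin 2 → Fin q) → ℝ :=
  fun _ => ((q : ℝ) ^ 2)⁻¹

/-!
Under `D^Y` every constraint joins two distinct colours, so the planted assignment satisfies all of
them. Both `D^Y` and `D^N` are invariant under permutations of the colours, hence all their
marginals equal `1/q`. For the NO bound write `[x ≠ y] = 1 - ∑_c [x = c] [y = c]`: by independence
of the `b_{i,σ}`, the constraint on `(σ, τ)` is satisfied with probability `1 - ∑_c P_σ(c) P_τ(c)`,
and averaging over uniform `(σ, τ)` gives `1 - q⁻² ∑_c (∑_σ P_σ(c))² ≤ 1 - 1/q` by Cauchy–Schwarz,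
as `∑_c ∑_σ P_σ(c) = q`.
-/

open Finset

section ProductWeights

-- `DecidableEq A` is left to `Classical`, so that `Fintype (ι → A → A)` is the instance used in `SN`.
variable {ι A : Type*} [Fintype ι] [DecidableEq ι] [Fintype A]

theorem sum_prod_weights (P : A → A → ℝ) (hP : ∀ σ, ∑ x, P σ x = 1) :
    ∑ b : ι → A → A, ∏ i, ∏ σ, P σ (b i σ) = 1 := by
  rw [← Fintype.prod_sum fun _ (u : A → A) => ∏ σ, P σ (u σ)]
  simp only [← Fintype.prod_sum, hP, prod_const_one]

theorem sum_prod_weights_mul_prod_eval (P : A → A → ℝ) (hP : ∀ σ, ∑ x, P σ x = 1)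
    (a : ι → A) (h : ι → A → ℝ) :
    ∑ b : ι → A → A, (∏ i, ∏ σ, P σ (b i σ)) * ∏ i, h i (b i (a i)) =
      ∏ i, ∑ x, P (a i) x * h i x := by
  have hfactor : ∀ b : ι → A → A, (∏ i, ∏ σ, P σ (b i σ)) * ∏ i, h i (b i (a i)) =
      ∏ i, ∏ σ, P σ (b i σ) * (if σ = a i then h i (b i σ) else 1) := fun b => by
    simp only [prod_mul_distrib, prod_ite_eq', mem_univ, if_true]
  have hfactor_sum : ∀ i σ, ∑ x, P σ x * (if σ = a i then h i x else 1) =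
      if σ = a i then ∑ x, P (a i) x * h i x else 1 := fun i σ => by
    split_ifs with hσ
    · rw [hσ]
    · simp [hP]
  simp only [hfactor]
  rw [← Fintype.prod_sum fun i (u : A → A) => ∏ σ, P σ (u σ) * (if σ = a i then h i (u σ) else 1)]
  refine prod_congr rfl fun i _ => ?_
  rw [← Fintype.prod_sum fun σ x => P σ x * if σ = a i then h i x else 1]
  simp only [hfactor_sum, prod_ite_eq', mem_univ, if_true]

end ProductWeights

theorem card_le_sum_sq_sum {A : Type*} [Fintype A] (P : A → A → ℝ) (hP : ∀ σ, ∑ x, P σ x = 1) :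
    (Fintype.card A : ℝ) ≤ ∑ x, (∑ σ, P σ x) ^ 2 := by
  have htotal : ∑ x, ∑ σ, P σ x = Fintype.card A := by
    rw [sum_comm]; simp [hP]
  have hcs := sq_sum_le_card_mul_sum_sq (s := univ) (f := fun x => ∑ σ, P σ x)
  rw [htotal, card_univ] at hcs
  have hnonneg : 0 ≤ ∑ x, (∑ σ, P σ x) ^ 2 := by positivity
  nlinarith

theorem sum_ite_eq_zero_else {A : Type*} [Fintype A] [DecidableEq A] (u : A) (c : ℝ) :
    ∑ v, (if u = v then 0 else c) = (Fintype.card A - 1) * c := by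
  have h : ∀ v, (if u = v then 0 else c) = c - if u = v then c else 0 := fun v => by
    split_ifs <;> ring
  simp only [h, sum_sub_distrib, sum_const, card_univ, nsmul_eq_mul, sum_ite_eq, mem_univ, if_true]
  ring

theorem mem_SY_one_of_support {A : Type*} [Fintype A] {k : ℕ} {F : Finset ((Fin k → A) → Bool)}
    {D : ↥F × (Fin k → A) → ℝ} (hD : IsDist D)
    (hsupp : ∀ p, D p ≠ 0 → (p.1 : (Fin k → A) → Bool) p.2 = true) :
    D ∈ SY F 1 := by
  refine ⟨hD, hD.2.symm.trans_le (le_of_eq (sum_congr rfl fun p _ => ?_))⟩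
  by_cases hp : D p = 0
  · simp [hp]
  · simp [cVal, planted, hsupp p hp]

theorem marginal_eq_div_card_of_perm_invariant {A : Type*} [Fintype A] {k : ℕ}
    {F : Finset ((Fin k → A) → Bool)} {D : ↥F × (Fin k → A) → ℝ}
    (hD : ∀ (π : Equiv.Perm A) p, D (p.1, π ∘ p.2) = D p) (x : ↥F × Fin k × A) :
    marginal F D x = (∑ a, D (x.1, a)) / Fintype.card A := by
  obtain ⟨f, i, σ⟩ := x
  have hconst : ∀ τ, marginal F D (f, i, τ) = marginal F D (f, i, σ) := fun τ => by
    simp only [marginal]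
    rw [← (Equiv.piCongrRight fun _ => Equiv.swap σ τ).sum_comp]
    refine sum_congr rfl fun a _ => ?_
    rw [show (Equiv.piCongrRight fun _ => Equiv.swap σ τ) a = Equiv.swap σ τ ∘ a from rfl,
      hD (Equiv.swap σ τ) (f, a), Function.comp_apply, Equiv.swap_apply_eq_iff, Equiv.swap_apply_right]
  have htotal : ∑ τ, marginal F D (f, i, τ) = ∑ a, D (f, a) := by
    simp only [marginal]
    rw [sum_comm]
    simp
  have : Nonempty A := ⟨σ⟩
  have hcard : (Fintype.card A : ℝ) ≠ 0 := by positivity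
  rw [← htotal, sum_congr rfl fun τ _ => hconst τ, sum_const, card_univ, nsmul_eq_mul]
  field_simp

theorem sum_eval_singleton_prod {X β : Type*} [Fintype β] {f : X}
    (g : ↥({f} : Finset X) × β → ℝ) :
    ∑ p, g p = ∑ b, g (default, b) := by
  rw [Fintype.sum_prod_type, Fintype.sum_unique]

theorem sum_eq_one_of_isDist_singleton {X β : Type*} [Fintype β] {f : X}
    {D : ↥({f} : Finset X) × β → ℝ} (hD : IsDist D) (g : ↥({f} : Finset X)) :
    ∑ b, D (g, b) = 1 := by
  rw [Subsingleton.elim g default, ← sum_eval_singleton_prod, hD.2]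

section Disequality

variable {A : Type*} [Fintype A] {f : (Fin 2 → A) → Bool}

theorem sum_prod_ite_eq_fin_two (c : Fin 2 → A) :
    ∑ x, ∏ i, (if c i = x then 1 else 0 : ℝ) = if c 0 = c 1 then 1 else 0 := by
  simp only [Fin.prod_univ_two, ite_zero_mul_ite_zero, one_mul]
  split_ifs with h
  · simp [h]
  · exact sum_eq_zero fun x _ => if_neg fun hx => h (hx.1.trans hx.2.symm)

theorem cVal_of_iff_ne (hf : ∀ c, f c = true ↔ c 0 ≠ c 1) (a : Fin 2 → A)
    (b : Fin 2 → A → A) :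
    cVal f a b = 1 - ∑ x, ∏ i, if b i (a i) = x then 1 else 0 := by
  rw [sum_prod_ite_eq_fin_two fun i => b i (a i)]
  by_cases h : b 0 (a 0) = b 1 (a 1) <;> simp [cVal, hf, h]

theorem sum_prod_weights_mul_cVal_of_iff_ne (hf : ∀ c, f c = true ↔ c 0 ≠ c 1)
    (P : A → A → ℝ) (hP : ∀ σ, ∑ x, P σ x = 1) (a : Fin 2 → A) :
    ∑ b : Fin 2 → A → A, (∏ i, ∏ σ, P σ (b i σ)) * cVal f a b =
      1 - ∑ x, ∏ i, P (a i) x := by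
  simp only [cVal_of_iff_ne hf, mul_sub, mul_one, mul_sum, sum_sub_distrib, sum_prod_weights P hP]
  rw [sum_comm]
  congr 1
  refine sum_congr rfl fun x _ => ?_
  rw [sum_prod_weights_mul_prod_eval P hP a fun _ y => if y = x then 1 else 0]
  simp

theorem uniform_mem_SN_of_iff_ne [Nonempty A] (hf : ∀ c, f c = true ↔ c 0 ≠ c 1) :
    (fun _ => ((Fintype.card A : ℝ) ^ 2)⁻¹ : ↥({f} : Finset ((Fin 2 → A) → Bool)) × (Fin 2 → A) → ℝ)
      ∈ SN {f} (1 - (Fintype.card A : ℝ)⁻¹) := by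
  have hn : (Fintype.card A : ℝ) ≠ 0 := by positivity
  refine ⟨⟨fun _ => by positivity, ?_⟩, fun P hP => ?_⟩
  · simp [Fintype.card_prod]
  have hPs : ∀ σ, ∑ x, P σ x = 1 := fun σ => (hP σ).2
  have hsq : ∑ a : Fin 2 → A, ∑ x, ∏ i, P (a i) x = ∑ x, (∑ σ, P σ x) ^ 2 := by
    rw [sum_comm]
    simp [Fintype.sum_pow]
  rw [sum_eval_singleton_prod]
  change ∑ a : Fin 2 → A, _ * ∑ b : Fin 2 → A → A, _ * cVal f a b ≤ _
  simp only [sum_prod_weights_mul_cVal_of_iff_ne hf P hPs, ← mul_sum, sum_sub_distrib, hsq,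
    sum_const, card_univ, Fintype.card_fun, Fintype.card_fin, nsmul_one, Nat.cast_pow]
  calc ((Fintype.card A : ℝ) ^ 2)⁻¹ * ((Fintype.card A) ^ 2 - ∑ x, (∑ σ, P σ x) ^ 2)
      ≤ ((Fintype.card A : ℝ) ^ 2)⁻¹ * ((Fintype.card A) ^ 2 - Fintype.card A) := by
        gcongr
        exact card_le_sum_sq_sum P hPs
    _ = 1 - (Fintype.card A : ℝ)⁻¹ := by field_simp

end Disequality

section Coloring

variable {q : ℕ}

theorem isDist_colDY (hq : 2 ≤ q) : IsDist (colDY q) := by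
  have hq' : (2 : ℝ) ≤ q := by exact_mod_cast hq
  have hq1 : (q : ℝ) - 1 ≠ 0 := by linarith
  refine ⟨fun p => ?_, ?_⟩
  · unfold colDY
    split_ifs
    · exact inv_nonneg.2 (mul_nonneg (by linarith) (by linarith))
    · rfl
  rw [sum_eval_singleton_prod, ← (piFinTwoEquiv fun _ => Fin q).symm.sum_comp,
    Fintype.sum_prod_type]
  simp only [colDY, piFinTwoEquiv_symm_apply, Fin.cons_zero, Fin.cons_one, ne_eq, mul_inv_rev,
    ite_not, sum_ite_eq_zero_else, Fintype.card_fin, sum_const, card_univ, nsmul_eq_mul]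
  field_simp

theorem colDY_comp_perm (π : Equiv.Perm (Fin q)) (p) : colDY q (p.1, π ∘ p.2) = colDY q p := by
  simp [colDY, π.injective.ne_iff]

theorem colDY_mem_SY (hq : 2 ≤ q) : colDY q ∈ SY {fNe q} 1 := by
  refine mem_SY_one_of_support (isDist_colDY hq) fun p hp => ?_
  rw [Finset.mem_singleton.1 p.1.2]
  simp only [colDY, ne_eq, ite_eq_right_iff, Classical.not_imp] at hp
  simpa [fNe] using hp.1

theorem colDN_mem_SN (hq : q ≠ 0) : colDN q ∈ SN {fNe q} (1 - (q : ℝ)⁻¹) := by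
  have : NeZero q := ⟨hq⟩
  have h := uniform_mem_SN_of_iff_ne (f := fNe q) (by simp [fNe])
  rw [Fintype.card_fin] at h
  exact h

theorem marginal_colDY_eq_marginal_colDN (hq : 2 ≤ q) :
    marginal {fNe q} (colDY q) = marginal {fNe q} (colDN q) := by
  funext x
  rw [marginal_eq_div_card_of_perm_invariant colDY_comp_perm,
    marginal_eq_div_card_of_perm_invariant fun _ _ => rfl,
    sum_eq_one_of_isDist_singleton (isDist_colDY hq),
    sum_eq_one_of_isDist_singleton (colDN_mem_SN (by omega)).1]

end Coloring

/-- Example 3 of the paper (`Max-qCol`): the pair `(D^Y, D^N)` witnesses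
`K_1^Y ∩ K_{1−1/q}^N ≠ ∅` for the Max-q-Coloring predicate. -/
theorem coloring_hard_pair (q : ℕ) (hq : 2 ≤ q) :
    colDY q ∈ SY ({fNe q} : Finset ((Fin 2 → Fin q) → Bool)) 1 ∧
    colDN q ∈ SN ({fNe q} : Finset ((Fin 2 → Fin q) → Bool)) (1 - (q : ℝ)⁻¹) ∧
    marginal ({fNe q} : Finset ((Fin 2 → Fin q) → Bool)) (colDY q) =
      marginal ({fNe q} : Finset ((Fin 2 → Fin q) → Bool)) (colDN q) :=
  ⟨colDY_mem_SY hq, colDN_mem_SN (by omega), marginal_colDY_eq_marginal_colDN hq⟩
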